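/- The Jacobian determinant of the map (x_1, ..., x_N, w_1, ..., w_N) ↦ (m_1, ..., m_{2N-1}, w_1 + ... + w_N), where m_j = Σ_k w_k x_k^j, equals (∏_{k=1}^N w_k)·Δ(x_1, ..., x_N)^4 up to sign, where Δ is the Vandermonde determinant. -/

import Mathlib

/-!
Cyclically shifting the rows and pulling the weights out of the `∂/∂x_k` columns turns the
Jacobian into the confluent Vandermonde matrix with columns `(x_k^i)_i` and `(i x_k^(i-1))_i`.
Its determinant is obtained by deformation: over `R[X]`, the Vandermonde matrix at the doubled
nodes `x_k, x_k + X` is the matrix of divided differences times a block-diagonal matrix of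
determinant `X^N`. Comparing with the Vandermonde product and cancelling the regular element
`X^N` computes the determinant of the divided-difference matrix, which specializes at `X = 0` to
the confluent matrix; each pair of nodes `k < l` contributes the four factors `x_l - x_k`.
-/

open Matrix

/-- The Jacobian matrix of the map `(x₁,…,x_N,w₁,…,w_N) ↦ (m₁,…,m_{2N-1}, ∑ w_k)`,
where `m_j = ∑_k w_k x_k^j`.  The first `2N-1` rows correspond to the moments
`m₁,…,m_{2N-1}` and the last row to `w₁ + ⋯ + w_N`; even-indexed columns are the
`∂/∂w_k` columns and odd-indexed columns the `∂/∂x_k` columns. -/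
noncomputable def momentSumJacobian (N : ℕ) (x w : Fin N → ℝ) :
    Matrix (Fin (2 * N)) (Fin (2 * N)) ℝ :=
  Matrix.of fun j c =>
    if j.1 + 1 < 2 * N then
      (if c.1 % 2 = 0 then x ⟨c.1 / 2, by omega⟩ ^ (j.1 + 1)
       else ((j.1 : ℝ) + 1) * w ⟨c.1 / 2, by omega⟩ * x ⟨c.1 / 2, by omega⟩ ^ j.1)
    else (if c.1 % 2 = 0 then 1 else 0)

open Finset

section PairIndex

variable {N : ℕ}

def pairEquiv (N : ℕ) : Fin 2 × Fin N ≃ Fin (2 * N) where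
  toFun p := ⟨2 * p.2 + p.1, by omega⟩
  invFun c := (⟨c % 2, by omega⟩, ⟨c / 2, by omega⟩)
  left_inv p := by ext <;> dsimp only <;> omega
  right_inv c := by ext; dsimp only; omega

def half (c : Fin (2 * N)) : Fin N := ⟨c / 2, by omega⟩

@[simp]
lemma pairEquiv_val (a : Fin 2) (k : Fin N) : (pairEquiv N (a, k) : ℕ) = 2 * k + a := rfl

@[simp]
lemma half_pairEquiv (a : Fin 2) (k : Fin N) : half (pairEquiv N (a, k)) = k := by
  ext
  simp only [half, pairEquiv_val]
  omega

lemma pairEquiv_lt_pairEquiv {a b : Fin 2} {k l : Fin N} :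
    pairEquiv N (a, k) < pairEquiv N (b, l) ↔ k < l ∨ k = l ∧ a < b := by
  simp only [Fin.lt_def, pairEquiv_val, Fin.ext_iff]
  omega

lemma prod_Ioi_pairEquiv {M : Type*} [CommMonoid M] (F : Fin (2 * N) → Fin (2 * N) → M) :
    ∏ i, ∏ j ∈ Ioi i, F i j = ∏ k, (F (pairEquiv N (0, k)) (pairEquiv N (1, k)) *
      ∏ l ∈ Ioi k, ∏ a, ∏ b, F (pairEquiv N (a, k)) (pairEquiv N (b, l))) := by
  have hblock (k l : Fin N) :
      ∏ a, ∏ b, (if pairEquiv N (a, k) < pairEquiv N (b, l)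
        then F (pairEquiv N (a, k)) (pairEquiv N (b, l)) else 1) =
      (if k = l then F (pairEquiv N (0, k)) (pairEquiv N (1, k)) else 1) *
        if k < l then ∏ a, ∏ b, F (pairEquiv N (a, k)) (pairEquiv N (b, l)) else 1 := by
    rcases lt_trichotomy k l with h | rfl | h
    · simp [pairEquiv_lt_pairEquiv, h, h.ne]
    · simp [pairEquiv_lt_pairEquiv, Fin.prod_univ_two]
    · simp [pairEquiv_lt_pairEquiv, h.not_gt, h.ne']
  simp_rw [← filter_lt_eq_Ioi, prod_filter]
  rw [← (pairEquiv N).prod_comp, Fintype.prod_prod_type_right]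
  refine prod_congr rfl fun k _ => ?_
  simp_rw [← (pairEquiv N).prod_comp, Fintype.prod_prod_type_right]
  rw [prod_comm]
  simp_rw [hblock, prod_mul_distrib, prod_ite_eq, mem_univ, if_true]

lemma prod_ite_parity {M : Type*} [CommMonoid M] (w : Fin N → M) :
    ∏ c : Fin (2 * N), (if c.1 % 2 = 0 then 1 else w (half c)) = ∏ k, w k := by
  rw [← (pairEquiv N).prod_comp, Fintype.prod_prod_type_right]
  simp [Fin.prod_univ_two]

end PairIndex

section DividedDifference

variable {N : ℕ} {S : Type*} [CommRing S]

def interleave (y u : Fin N → S) (c : Fin (2 * N)) : S :=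
  if c.1 % 2 = 0 then y (half c) else u (half c)

/-- The odd columns hold the divided differences `(u^i - y^i) / (u - y)`, written without
division. -/
def dividedDifferenceMatrix (y u : Fin N → S) : Matrix (Fin (2 * N)) (Fin (2 * N)) S :=
  of fun i c => if c.1 % 2 = 0 then y (half c) ^ i.1
    else ∑ a ∈ range i, u (half c) ^ a * y (half c) ^ (i.1 - 1 - a)

lemma vandermonde_interleave_transpose (y u : Fin N → S) :
    (vandermonde (interleave y u))ᵀ = dividedDifferenceMatrix y u *
      (blockDiagonal fun k => !![1, 1; 0, u k - y k]).submatrix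
        (pairEquiv N).symm (pairEquiv N).symm := by
  ext i c
  obtain ⟨⟨a, k⟩, rfl⟩ := (pairEquiv N).surjective c
  rw [mul_apply, ← (pairEquiv N).sum_comp, Fintype.sum_prod_type_right]
  fin_cases a
  · simp [interleave, dividedDifferenceMatrix, blockDiagonal_apply]
  · have hgeom : u k ^ (i : ℕ) =
        y k ^ (i : ℕ) + (∑ a ∈ range i, u k ^ a * y k ^ (i - 1 - a)) * (u k - y k) := by
      linear_combination -geom_sum₂_mul (u k) (y k) i
    simpa [interleave, dividedDifferenceMatrix, blockDiagonal_apply] using hgeom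

lemma det_vandermonde_interleave (y u : Fin N → S) :
    det (vandermonde (interleave y u)) =
      (∏ k, (u k - y k)) * det (dividedDifferenceMatrix y u) := by
  rw [← det_transpose, vandermonde_interleave_transpose, det_mul, det_submatrix_equiv_self,
    det_blockDiagonal, mul_comm]
  simp [det_fin_two_of]

lemma det_vandermonde_interleave_eq_prod (y u : Fin N → S) :
    det (vandermonde (interleave y u)) = ∏ k, ((u k - y k) *
      ∏ l ∈ Ioi k, (y l - y k) * (u l - y k) * ((y l - u k) * (u l - u k))) := by
  rw [det_vandermonde, prod_Ioi_pairEquiv]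
  simp [interleave, Fin.prod_univ_two]

lemma det_dividedDifferenceMatrix {y u : Fin N → S} (h : IsRegular (∏ k, (u k - y k))) :
    det (dividedDifferenceMatrix y u) =
      ∏ k, ∏ l ∈ Ioi k, (y l - y k) * (u l - y k) * ((y l - u k) * (u l - u k)) :=
  h.left <| by
    dsimp only
    rw [← det_vandermonde_interleave, det_vandermonde_interleave_eq_prod, prod_mul_distrib]

lemma dividedDifferenceMatrix_map {T : Type*} [CommRing T] (f : S →+* T) (y u : Fin N → S) :
    (dividedDifferenceMatrix y u).map f = dividedDifferenceMatrix (f ∘ y) (f ∘ u) := by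
  ext i c
  simp [dividedDifferenceMatrix, apply_ite f]

end DividedDifference

section Confluent

variable {N : ℕ} {R : Type*} [CommRing R]

def confluentVandermonde (x : Fin N → R) : Matrix (Fin (2 * N)) (Fin (2 * N)) R :=
  of fun i c => if c.1 % 2 = 0 then x (half c) ^ i.1 else i.1 * x (half c) ^ (i.1 - 1)

lemma dividedDifferenceMatrix_self (x : Fin N → R) :
    dividedDifferenceMatrix x x = confluentVandermonde x := by
  ext i c
  simp [dividedDifferenceMatrix, confluentVandermonde, geom_sum₂_self]

open Polynomial in
theorem det_confluentVandermonde (x : Fin N → R) :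
    det (confluentVandermonde x) = ∏ k, ∏ l ∈ Ioi k, (x l - x k) ^ 4 := by
  have hX : ∏ k : Fin N, (C (x k) + X - C (x k)) = X ^ N := by simp
  have hdet := congrArg (evalRingHom 0) <| det_dividedDifferenceMatrix
    (y := fun k => C (x k)) (u := fun k => C (x k) + X) (hX ▸ (monic_X_pow N).isRegular)
  rw [RingHom.map_det, RingHom.mapMatrix_apply, dividedDifferenceMatrix_map] at hdet
  simp only [Function.comp_def, coe_evalRingHom, eval_add, eval_C, eval_X, add_zero,
    dividedDifferenceMatrix_self] at hdet
  rw [hdet, eval_prod]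
  refine prod_congr rfl fun k _ => ?_
  rw [eval_prod]
  refine prod_congr rfl fun l _ => ?_
  simp only [eval_mul, eval_sub, eval_add, eval_C, eval_X, add_zero]
  ring

end Confluent

section Jacobian

variable {N : ℕ}

lemma momentSumJacobian_eq_submatrix (hN : 0 < N) (x w : Fin N → ℝ) :
    momentSumJacobian N x w = (of fun i c => (if c.1 % 2 = 0 then 1 else w (half c)) *
      confluentVandermonde x i c).submatrix (finRotate (2 * N)) id := by
  have : NeZero (2 * N) := ⟨by omega⟩
  ext j c
  have hrot : (finRotate (2 * N) j : ℕ) = if j.1 + 1 < 2 * N then j.1 + 1 else 0 := by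
    rw [finRotate_apply, Fin.val_add, Fin.val_one', Nat.one_mod_eq_one.mpr (by omega)]
    split_ifs with h
    · exact Nat.mod_eq_of_lt h
    · rw [show j.1 + 1 = 2 * N by omega, Nat.mod_self]
  simp only [momentSumJacobian, confluentVandermonde, half, submatrix_apply, of_apply, id, hrot]
  split_ifs <;> push_cast [add_tsub_cancel_right] <;> ring

lemma det_momentSumJacobian (hN : 0 < N) (x w : Fin N → ℝ) :
    det (momentSumJacobian N x w) = -((∏ k, w k) * ∏ k, ∏ l ∈ Ioi k, (x l - x k) ^ 4) := by
  have hodd : Odd (2 * N - 1) := ⟨N - 1, by omega⟩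
  rw [momentSumJacobian_eq_submatrix hN, det_permute, sign_finRotate, hodd.neg_one_pow,
    det_mul_row, prod_ite_parity, det_confluentVandermonde]
  simp

end Jacobian

theorem momentSumJacobian_det_general (N : ℕ) (hN : 0 < N) (x w : Fin N → ℝ) :
    |(momentSumJacobian N x w).det|
      = |(∏ k, w k) * (∏ j, ∏ k ∈ Finset.Ioi j, (x j - x k)) ^ 4| := by
  rw [det_momentSumJacobian hN, abs_neg, ← prod_pow]
  congr 2
  refine prod_congr rfl fun j _ => ?_
  rw [← prod_pow]
  exact prod_congr rfl fun k _ => by ring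

/-- The Jacobian determinant of `(x₁,…,x_N,w₁,…,w_N) ↦ (m₁,…,m_{2N-1}, ∑ w_k)`
equals, up to sign, `(∏ w_k)·Δ(x₁,…,x_N)⁴` where `Δ = ∏_{j<k}(x_j - x_k)`. -/
theorem momentSumJacobian_det (N : ℕ) (hN : 0 < N) (x w : Fin N → ℝ)
    (hx : StrictMono x) (hx01 : ∀ k, x k ∈ Set.Ioo (0 : ℝ) 1)
    (hw : ∀ k, 0 < w k) :
    |(momentSumJacobian N x w).det|
      = |(∏ k, w k) * (∏ j, ∏ k ∈ Finset.Ioi j, (x j - x k)) ^ 4| :=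
  momentSumJacobian_det_general N hN x w
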